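/- arXiv:2203.14646 — 3 statements merged into one kernel-verified Lean document; each statement's English description precedes it below -/
import Mathlib

section
/- Negation of backward folding on a side branch: Let BN be a batch-normalization map on ℝ^n with parameters γ, β, μ, σ and constant ε, where σ j + ε ≠ 0 and γ j ≠ 0 for all j, and let W : Matrix (Fin m) (Fin n) ℝ and b : Fin m → ℝ. Define the updated weights W̄ by W̄ i j = W i j * (σ j + ε) / γ j and the updated bias b̄ by b̄ i = b i + ∑ j, W i j * (μ j − β j * (σ j + ε) / γ j). Then for every x : Fin n → ℝ, W̄.mulVec (BN x) + b̄ = W.mulVec x + b; i.e., the updated expressive layer applied to batch-normalized inputs computes exactly the original expressive layer applied to the raw inputs. -/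
/-- Negation of backward folding on a side branch. -/
theorem negate_backward_folding (m n : ℕ)
    (γ β μ σ : Fin n → ℝ) (ε : ℝ)
    (hσ : ∀ j, σ j + ε ≠ 0) (hγ : ∀ j, γ j ≠ 0)
    (BN : (Fin n → ℝ) → (Fin n → ℝ))
    (hBN : ∀ x j, BN x j = γ j * (x j - μ j) / (σ j + ε) + β j)
    (W : Matrix (Fin m) (Fin n) ℝ) (b : Fin m → ℝ)
    (Wbar : Matrix (Fin m) (Fin n) ℝ)
    (hWbar : ∀ i j, Wbar i j = W i j * (σ j + ε) / γ j)
    (bbar : Fin m → ℝ)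
    (hbbar : ∀ i, bbar i = b i + ∑ j, W i j * (μ j - β j * (σ j + ε) / γ j)) :
    ∀ x : Fin n → ℝ, Wbar.mulVec (BN x) + bbar = W.mulVec x + b := by
  intro x
  funext i
  simp only [Pi.add_apply, Matrix.mulVec, dotProduct, hbbar, hWbar, hBN]
  rw [← add_assoc, add_comm _ (b i), add_assoc, add_comm _ (b i), add_left_cancel_iff,
    ← Finset.sum_add_distrib]
  apply Finset.sum_congr rfl
  intro j _
  have h1 := hσ j
  have h2 := hγ j
  field_simp
  ring
end

section
/- Forward folding through an intermediate BN-equivariant layer (general sequential case): Let BN be a batch-normalization map on ℝ^n with parameters γ, β, μ, σ and constant ε, where σ j + ε ≠ 0 for all j, let g : (Fin n → ℝ) → (Fin n → ℝ) be a map that commutes with BN (g ∘ BN = BN ∘ g), and let W : Matrix (Fin m) (Fin n) ℝ, b : Fin m → ℝ. Define W' i j = W i j * γ j / (σ j + ε) and b' i = b i + ∑ j, W i j * (β j − γ j * μ j / (σ j + ε)). Then for every x : Fin n → ℝ, W.mulVec (g (BN x)) + b = W'.mulVec (g x) + b'; i.e., a BN layer separated from the next expressive layer by an intermediate layer commuting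 with BN can still be folded forward into that expressive layer. -/
/-- Forward folding through an intermediate BN-equivariant layer. -/
theorem forward_folding_through_equivariant (m n : ℕ)
    (γ β μ σ : Fin n → ℝ) (ε : ℝ)
    (hσ : ∀ j, σ j + ε ≠ 0)
    (BN : (Fin n → ℝ) → (Fin n → ℝ))
    (hBN : ∀ x j, BN x j = γ j * (x j - μ j) / (σ j + ε) + β j)
    (g : (Fin n → ℝ) → (Fin n → ℝ))
    (hg : g ∘ BN = BN ∘ g)
    (W : Matrix (Fin m) (Fin n) ℝ) (b : Fin m → ℝ)
    (W' : Matrix (Fin m) (Fin n) ℝ)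
    (hW' : ∀ i j, W' i j = W i j * γ j / (σ j + ε))
    (b' : Fin m → ℝ)
    (hb' : ∀ i, b' i = b i + ∑ j, W i j * (β j - γ j * μ j / (σ j + ε))) :
    ∀ x : Fin n → ℝ, W.mulVec (g (BN x)) + b = W'.mulVec (g x) + b' := by
  intro x
  have hcomm : g (BN x) = BN (g x) := congrFun hg x
  funext i
  simp only [Pi.add_apply, Matrix.mulVec, dotProduct, hcomm, hBN, hW', hb']
  have h : ∑ j : Fin n, W i j * (γ j * (g x j - μ j) / (σ j + ε) + β j)
      = ∑ j : Fin n, (W i j * γ j / (σ j + ε) * g x j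
        + W i j * (β j - γ j * μ j / (σ j + ε))) := by
    apply Finset.sum_congr rfl
    intro j _
    field_simp
    ring
  rw [h, Finset.sum_add_distrib]
  ring
end

section
/- Sufficiency of the folding condition in the skip-connection case study: Let W₁ : Matrix (Fin n) (Fin p) ℝ, b₁ : Fin n → ℝ; W₂, W₃ : Matrix (Fin m) (Fin n) ℝ, b₂, b₃ : Fin m → ℝ; W₄ : Matrix (Fin q) (Fin m) ℝ, b₄ : Fin q → ℝ. Let BN be a batch-normalization map on ℝ^m with parameters γ, β, μ, σ and constant ε, with σ i + ε ≠ 0 and γ i ≠ 0 for all i. Let g₁ : (Fin m → ℝ) → (Fin m → ℝ) → (Fin m → ℝ) and g₂ : (Fin m → ℝ) → (Fin m → ℝ) satisfy the equivariance conditions g₁ (BN u) (BN v) = BN (g₁ u v) for all u, v, and g₂ (BN u) = BN (g₂ u) for all u. Define the original network outputs G₁ x = g₁ (W₂.mulVec (W₁.mulVec x + b₁) + b₂) (W₃.mulVec (W₁.mulVec x + b₁) + b₃), G₂ x = g₂ (G₁ x), and f x = (BN (G₂ x), W₄.mulVec (G₂ x) + b₄). Define the folded parameters: W̃₂ i j =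 γ i * W₂ i j / (σ i + ε), b̃₂ i = γ i * (b₂ i − μ i) / (σ i + ε) + β i, and likewise W̃₃, b̃₃ from W₃, b₃; and the negated parameters W̄₄ i j = W₄ i j * (σ j + ε) / γ j, b̄₄ i = b₄ i + ∑ j, W₄ i j * (μ j − β j * (σ j + ε) / γ j). Define G̃₁ x = g₁ (W̃₂.mulVec (W₁.mulVec x + b₁) + b̃₂) (W̃₃.mulVec (W₁.mulVec x + b₁) + b̃₃) and G̃₂ x = g₂ (G̃₁ x). Then for every x : Fin p → ℝ: (i) G̃₂ x = BN (G₂ x), and (ii) the folded network (G̃₂ x, W̄₄.mulVec (G̃₂ x) + b̄₄) equals the original (BN (G₂ x), W₄.mulVec (G₂ x) + b₄). -/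
/-- Sufficiency of the folding condition in the skip-connection case study. -/
theorem skip_connection_folding (m n p q : ℕ)
    (W₁ : Matrix (Fin n) (Fin p) ℝ) (b₁ : Fin n → ℝ)
    (W₂ W₃ : Matrix (Fin m) (Fin n) ℝ) (b₂ b₃ : Fin m → ℝ)
    (W₄ : Matrix (Fin q) (Fin m) ℝ) (b₄ : Fin q → ℝ)
    (γ β μ σ : Fin m → ℝ) (ε : ℝ)
    (hσ : ∀ i, σ i + ε ≠ 0) (hγ : ∀ i, γ i ≠ 0)
    (BN : (Fin m → ℝ) → (Fin m → ℝ))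
    (hBN : ∀ x i, BN x i = γ i * (x i - μ i) / (σ i + ε) + β i)
    (g₁ : (Fin m → ℝ) → (Fin m → ℝ) → (Fin m → ℝ))
    (hg₁ : ∀ u v, g₁ (BN u) (BN v) = BN (g₁ u v))
    (g₂ : (Fin m → ℝ) → (Fin m → ℝ))
    (hg₂ : ∀ u, g₂ (BN u) = BN (g₂ u))
    (G₁ G₂ : (Fin p → ℝ) → (Fin m → ℝ))
    (hG₁ : ∀ x, G₁ x = g₁ (W₂.mulVec (W₁.mulVec x + b₁) + b₂)
                          (W₃.mulVec (W₁.mulVec x + b₁) + b₃))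
    (hG₂ : ∀ x, G₂ x = g₂ (G₁ x))
    (f : (Fin p → ℝ) → (Fin m → ℝ) × (Fin q → ℝ))
    (hf : ∀ x, f x = (BN (G₂ x), W₄.mulVec (G₂ x) + b₄))
    (W₂t W₃t : Matrix (Fin m) (Fin n) ℝ) (b₂t b₃t : Fin m → ℝ)
    (hW₂t : ∀ i j, W₂t i j = γ i * W₂ i j / (σ i + ε))
    (hb₂t : ∀ i, b₂t i = γ i * (b₂ i - μ i) / (σ i + ε) + β i)
    (hW₃t : ∀ i j, W₃t i j = γ i * W₃ i j / (σ i + ε))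
    (hb₃t : ∀ i, b₃t i = γ i * (b₃ i - μ i) / (σ i + ε) + β i)
    (W₄bar : Matrix (Fin q) (Fin m) ℝ) (b₄bar : Fin q → ℝ)
    (hW₄bar : ∀ i j, W₄bar i j = W₄ i j * (σ j + ε) / γ j)
    (hb₄bar : ∀ i, b₄bar i = b₄ i + ∑ j, W₄ i j * (μ j - β j * (σ j + ε) / γ j))
    (G₁t G₂t : (Fin p → ℝ) → (Fin m → ℝ))
    (hG₁t : ∀ x, G₁t x = g₁ (W₂t.mulVec (W₁.mulVec x + b₁) + b₂t)
                            (W₃t.mulVec (W₁.mulVec x + b₁) + b₃t))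
    (hG₂t : ∀ x, G₂t x = g₂ (G₁t x)) :
    ∀ x : Fin p → ℝ,
      G₂t x = BN (G₂ x) ∧
      (G₂t x, W₄bar.mulVec (G₂t x) + b₄bar) = (BN (G₂ x), W₄.mulVec (G₂ x) + b₄) := by

  -- Key lemma: folded affine leaf = BN of original affine leaf
  have key : ∀ (W : Matrix (Fin m) (Fin n) ℝ) (b : Fin m → ℝ)
      (Wt : Matrix (Fin m) (Fin n) ℝ) (bt : Fin m → ℝ),
      (∀ i j, Wt i j = γ i * W i j / (σ i + ε)) →
      (∀ i, bt i = γ i * (b i - μ i) / (σ i + ε) + β i) →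
      ∀ y, Wt.mulVec y + bt = BN (W.mulVec y + b) := by
    intro W b Wt bt hWt hbt y
    funext i
    simp only [Pi.add_apply, hBN, Matrix.mulVec, dotProduct, hWt, hbt]
    rw [Finset.sum_congr rfl (fun j _ => by
      ring : ∀ j ∈ Finset.univ, γ i * W i j / (σ i + ε) * y j
        = γ i * (W i j * y j) / (σ i + ε))]
    rw [← Finset.sum_div, ← Finset.mul_sum]
    have hs := hσ i
    field_simp
    ring
  intro x
  have h1 : G₁t x = BN (G₁ x) := by
    rw [hG₁t, hG₁, key W₂ b₂ W₂t b₂t hW₂t hb₂t, key W₃ b₃ W₃t b₃t hW₃t hb₃t, hg₁]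
  have h2 : G₂t x = BN (G₂ x) := by rw [hG₂t, h1, hg₂, hG₂]
  refine ⟨h2, ?_⟩
  rw [h2]
  refine Prod.ext rfl ?_
  funext i
  simp only [Pi.add_apply, Matrix.mulVec, dotProduct, hW₄bar, hb₄bar, hBN]
  rw [add_comm (b₄ i), ← add_assoc, ← Finset.sum_add_distrib]
  have : ∀ j ∈ Finset.univ, W₄ i j * (σ j + ε) / γ j * (γ j * (G₂ x j - μ j) / (σ j + ε) + β j)
      + W₄ i j * (μ j - β j * (σ j + ε) / γ j) = W₄ i j * G₂ x j := by
    intro j _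
    have hs := hσ j
    have hg := hγ j
    field_simp
    ring
  rw [Finset.sum_congr rfl this]
end
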